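/- arXiv:2411.06083 — 3 statements merged into one kernel-verified Lean document; each statement's English description precedes it below -/
import Mathlib

section
/- For all elements w₁, w₂ of ℍ¹_t, the t-stuffle product is commutative: w₁ ⋆_t w₂ = w₂ ⋆_t w₁. -/
/- ℍ_t = ℚ[t]⟨x,y⟩, z_k = x^{k-1}y, and the t-stuffle product ⋆_t on the word
basis of ℍ¹_t (a ℚ[t]-bilinear map is determined by its values on words). -/

noncomputable section

open Polynomial Finset

abbrev R : Type := Polynomial ℚ
abbrev A : Type := FreeAlgebra R Bool

def Xg : A := FreeAlgebra.ι R false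
def Yg : A := FreeAlgebra.ι R true
def tp : R := Polynomial.X

/-- `z k = x^(k-1) y`. -/
def z (k : ℕ) : A := Xg ^ (k - 1) * Yg

/-- The word `z_{k₁} ⋯ z_{kₙ}`. -/
def zw (w : List ℕ) : A := (w.map z).prod

/-- The t-stuffle product, given on the word basis of ℍ¹_t. -/
def tst : List ℕ → List ℕ → A
  | [], w => zw w
  | k :: w₁, [] => zw (k :: w₁)
  | k :: w₁, l :: w₂ =>
      z k * tst w₁ (l :: w₂) + z l * tst (k :: w₁) w₂
        + (1 - 2 * tp) • (z (k + l) * tst w₁ w₂)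
        + (if w₁ = [] ∧ w₂ = [] then (0 : R) else tp ^ 2 - tp) • (Xg ^ (k + l) * tst w₁ w₂)
  termination_by w₁ w₂ => w₁.length + w₂.length

/-- the t-stuffle product is commutative on ℍ¹_t (equivalently, on all
words `z_{k₁}⋯z_{kₙ}`, since it is ℚ[t]-bilinear). -/
theorem tst_comm (w₁ w₂ : List ℕ) (h₁ : ∀ k ∈ w₁, 1 ≤ k) (h₂ : ∀ k ∈ w₂, 1 ≤ k) :
    tst w₁ w₂ = tst w₂ w₁ := by
  clear h₁ h₂
  suffices h : ∀ n (w₁ w₂ : List ℕ), w₁.length + w₂.length = n → tst w₁ w₂ = tst w₂ w₁ from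
    h _ w₁ w₂ rfl
  intro n
  induction n using Nat.strong_induction_on with
  | _ n ih =>
  intro w₁ w₂ hn
  match w₁, w₂ with
  | [], w₂ => cases w₂ <;> simp [tst]
  | k::w₁, [] => simp [tst]
  | k::w₁, l::w₂ =>
    rw [tst, tst]
    have h1 : tst w₁ (l::w₂) = tst (l::w₂) w₁ := by
      apply ih (w₁.length + (l::w₂).length) _ _ _ rfl
      simp at hn ⊢; omega
    have h2 : tst (k::w₁) w₂ = tst w₂ (k::w₁) := by
      apply ih ((k::w₁).length + w₂.length) _ _ _ rfl
      simp at hn ⊢; omega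
    have h3 : tst w₁ w₂ = tst w₂ w₁ := by
      apply ih (w₁.length + w₂.length) _ _ _ rfl
      simp at hn ⊢; omega
    rw [h1, h2, h3, Nat.add_comm k l]
    have h4 : (w₁ = [] ∧ w₂ = []) = (w₂ = [] ∧ w₁ = []) := by
      simp [and_comm]
    simp only [h4]
    abel
end
end

section
/- For integers m ≥ 0, n ≥ 0 and p ≥ 1, one has z_p^m ⋆_t z_p^n = Σ_{0 ≤ k ≤ min(m,n)} Σ_{i+j=k, i,j ≥ 0} C(m+n−2k, m−k) (t²−t)^i (1−2t)^j Σ z_{a₁}⋯z_{a_{n+m−i−k}}, where the inner sum is over all sequences (a₁,…,a_{n+m−i−k}) of positive integer multiples of p with a₁+⋯+a_{n+m−i−k} = (n+m)p such that exactly j of the entries a_l are even multiples of p. -/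
/- ℍ_t = ℚ[t]⟨x,y⟩, z_k = x^{k-1}y, and the t-stuffle product ⋆_t on the word
basis of ℍ¹_t (a ℚ[t]-bilinear map is determined by its values on words). -/

noncomputable section

open Polynomial Finset

-- auxiliary development
lemma zw_nil : zw [] = 1 := rfl

lemma zw_cons (a : ℕ) (l : List ℕ) : zw (a :: l) = z a * zw l := by
  simp [zw]

lemma zw_ofFn_succ {N : ℕ} (c : Fin (N+1) → ℕ) :
    zw (List.ofFn c) = z (c 0) * zw (List.ofFn (Fin.tail c)) := by
  rw [List.ofFn_succ, zw_cons]; rfl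

lemma z_split (p a : ℕ) (h : 2*p + 1 ≤ a) : z a = Xg ^ (2*p) * z (a - 2*p) := by
  unfold z
  rw [← mul_assoc, ← pow_add]
  congr 2
  omega

/-- the sum of `zw` over compositions of `s*p` into `N` parts, each a positive
multiple of `p`, exactly `j` of which are multiples of `2p`. -/
def T (p N s j : ℕ) : A :=
  ∑ c ∈ (Finset.Nat.antidiagonalTuple N (s * p)).filter
      (fun c => (∀ r, p ∣ c r ∧ c r ≠ 0) ∧
        (Finset.univ.filter fun r => 2 * p ∣ c r).card = j),
    zw (List.ofFn c)

lemma card_filter_succ {N : ℕ} (Q : Fin (N+1) → Prop) [DecidablePred Q] :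
    (Finset.univ.filter Q).card
      = (if Q 0 then 1 else 0) + (Finset.univ.filter fun r : Fin N => Q r.succ).card := by
  rw [Finset.card_filter, Finset.card_filter, Fin.sum_univ_succ]

section P
variable {p : ℕ} (hp : 1 ≤ p)

include hp

lemma T_zero_left {s j : ℕ} (hs : s ≠ 0) : T p 0 s j = 0 := by
  unfold T
  apply Finset.sum_eq_zero
  intro c hc
  simp only [Finset.mem_filter, Finset.Nat.mem_antidiagonalTuple] at hc
  have h0 : (0:ℕ) = s * p := by simpa using hc.1
  exact absurd h0.symm (Nat.mul_ne_zero hs (by omega))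

lemma T_card {N s j : ℕ} (h : N < j) : T p N s j = 0 := by
  unfold T
  apply Finset.sum_eq_zero
  intro c hc
  simp only [Finset.mem_filter] at hc
  have h1 := hc.2.2
  have h2 : (Finset.univ.filter fun r => 2 * p ∣ c r).card ≤ N := by
    simpa using Finset.card_filter_le (Finset.univ : Finset (Fin N)) (fun r => 2 * p ∣ c r)
  omega

lemma T_small {N s j : ℕ} (h : s < N + j) : T p N s j = 0 := by
  unfold T
  apply Finset.sum_eq_zero
  intro c hc
  exfalso
  simp only [Finset.mem_filter, Finset.Nat.mem_antidiagonalTuple] at hc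
  obtain ⟨hsum, hdvd, hcard⟩ := hc
  have hb : ∀ r, p + (if 2*p ∣ c r then p else 0) ≤ c r := by
    intro r
    have h1 := Nat.le_of_dvd (Nat.pos_of_ne_zero (hdvd r).2) (hdvd r).1
    by_cases hq : 2*p ∣ c r
    · have h2 := Nat.le_of_dvd (Nat.pos_of_ne_zero (hdvd r).2) hq
      simp only [hq, if_true]
      omega
    · simp only [hq, if_false]
      omega
  have hsum2 : ∑ r, (p + (if 2*p ∣ c r then p else 0)) ≤ s * p :=
    hsum ▸ Finset.sum_le_sum (fun r _ => hb r)
  rw [Finset.sum_add_distrib, Finset.sum_const, ← Finset.sum_filter, Finset.sum_const, hcard]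
    at hsum2
  simp only [smul_eq_mul, Finset.card_univ, Fintype.card_fin] at hsum2
  have h3 : (N + j) * p ≤ s * p := by rw [Nat.add_mul]; omega
  have := Nat.le_of_mul_le_mul_right h3 (by omega : 0 < p)
  omega

lemma T_diag (N : ℕ) : T p N N 0 = zw (List.replicate N p) := by
  have hset : (Finset.Nat.antidiagonalTuple N (N * p)).filter
      (fun c => (∀ r, p ∣ c r ∧ c r ≠ 0) ∧
        (Finset.univ.filter fun r => 2 * p ∣ c r).card = 0)
      = {fun _ => p} := by
    ext c
    simp only [Finset.mem_filter, Finset.Nat.mem_antidiagonalTuple, Finset.mem_singleton]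
    constructor
    · rintro ⟨hsum, hdvd, hcard⟩
      funext r
      by_contra hne
      have hle : ∀ i ∈ Finset.univ, p ≤ c i := fun i _ =>
        Nat.le_of_dvd (Nat.pos_of_ne_zero (hdvd i).2) (hdvd i).1
      have : ∑ _i : Fin N, p < ∑ i, c i := by
        apply Finset.sum_lt_sum hle
        refine ⟨r, Finset.mem_univ r, lt_of_le_of_ne (hle r (Finset.mem_univ r)) (Ne.symm hne)⟩
      rw [hsum] at this
      simp only [Finset.sum_const, Finset.card_univ, Fintype.card_fin, smul_eq_mul] at this
      exact absurd this (lt_irrefl _)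
    · rintro rfl
      refine ⟨by simp [Finset.sum_const, mul_comm], fun r => ⟨dvd_rfl, by show p ≠ 0; omega⟩, ?_⟩
      rw [Finset.card_eq_zero, Finset.filter_eq_empty_iff]
      intro r _
      show ¬ (2 * p ∣ p)
      intro hdvd
      have := Nat.le_of_dvd (by omega) hdvd
      omega
  rw [T, hset, Finset.sum_singleton, List.ofFn_const]


lemma not_two_dvd_p : ¬ (2 * p ∣ p) := by
  intro hd
  have := Nat.le_of_dvd (by omega) hd
  omega

lemma ge_three (a : ℕ) (h1 : p ∣ a) (h2 : a ≠ 0) (h3 : a ≠ p) (h4 : a ≠ 2*p) :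
    2*p + 1 ≤ a := by
  obtain ⟨d, rfl⟩ := h1
  rcases d with _ | _ | _ | d
  · omega
  · omega
  · omega
  · have e : p * (d+1+1+1) = p*d + 3*p := by ring
    omega

lemma T_rec (N' s j : ℕ) (hs : 1 ≤ s) :
    T p (N'+1) (s+2) j = z p * T p N' (s+1) j
      + (if j = 0 then (0:A) else z (2*p) * T p N' s (j-1))
      + Xg ^ (2*p) * T p (N'+1) s j := by
  have hps : ∀ a : ℕ, (a+1) * p = a * p + p := fun a => by ring
  set S := (Finset.Nat.antidiagonalTuple (N'+1) ((s+2) * p)).filter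
      (fun c => (∀ r, p ∣ c r ∧ c r ≠ 0) ∧
        (Finset.univ.filter fun r => 2 * p ∣ c r).card = j) with hSdef
  have h0 : T p (N'+1) (s+2) j = ∑ c ∈ S, zw (List.ofFn c) := rfl
  rw [h0, ← Finset.sum_filter_add_sum_filter_not S (fun c => c 0 = p),
    ← Finset.sum_filter_add_sum_filter_not (S.filter (fun c => ¬ c 0 = p)) (fun c => c 0 = 2*p)]
  have E1 : ∑ c ∈ S.filter (fun c => c 0 = p), zw (List.ofFn c) = z p * T p N' (s+1) j := by
    rw [T, Finset.mul_sum]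
    refine Finset.sum_nbij' (fun c => Fin.tail c) (fun c => Fin.cons p c) ?_ ?_ ?_ ?_ ?_
    · intro c hc
      simp only [hSdef, Finset.mem_filter, Finset.Nat.mem_antidiagonalTuple] at hc ⊢
      obtain ⟨⟨hsum, hdvd, hcard⟩, hc0⟩ := hc
      refine ⟨?_, fun r => hdvd r.succ, ?_⟩
      · have h2 := Fin.sum_univ_succ c
        rw [hsum, hc0] at h2
        have h3 : ∑ i : Fin N', Fin.tail c i = ∑ i : Fin N', c i.succ := rfl
        have e1 : (s+2)*p = s*p + 2*p := by ring
        have e2 : (s+1)*p = s*p + p := by ring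
        omega
      · rw [card_filter_succ (fun r : Fin (N'+1) => 2*p ∣ c r)] at hcard
        rw [hc0, if_neg (not_two_dvd_p hp)] at hcard
        have h3 : (Finset.univ.filter fun r : Fin N' => 2*p ∣ Fin.tail c r)
            = (Finset.univ.filter fun r : Fin N' => 2*p ∣ c r.succ) := rfl
        rw [h3]
        omega
    · intro c hc
      simp only [hSdef, Finset.mem_filter, Finset.Nat.mem_antidiagonalTuple] at hc ⊢
      obtain ⟨hsum, hdvd, hcard⟩ := hc
      have hzero : Fin.cons (α := fun _ => ℕ) p c 0 = p := Fin.cons_zero _ _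
      refine ⟨⟨?_, ?_, ?_⟩, hzero⟩
      · rw [Fin.sum_univ_succ]
        simp only [Fin.cons_zero, Fin.cons_succ]
        rw [hsum]
        have e2 : (s+1)*p = s*p + p := by ring
        have e1 : (s+2)*p = s*p + 2*p := by ring
        omega
      · intro r
        refine Fin.cases ?_ ?_ r
        · simp only [Fin.cons_zero]
          exact ⟨dvd_rfl, by omega⟩
        · intro i
          simpa using hdvd i
      · rw [card_filter_succ (fun r : Fin (N'+1) => 2*p ∣ (Fin.cons (α := fun _ => ℕ) p c) r)]
        rw [show (Fin.cons (α := fun _ => ℕ) p c 0) = p from Fin.cons_zero _ _]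
        rw [if_neg (not_two_dvd_p hp)]
        have h3 : (Finset.univ.filter fun r : Fin N' => 2*p ∣ Fin.cons (α := fun _ => ℕ) p c r.succ)
            = (Finset.univ.filter fun r : Fin N' => 2*p ∣ c r) := by
          apply Finset.filter_congr
          intro r _
          rw [Fin.cons_succ]
        rw [h3, hcard]
        omega
    · intro c hc
      simp only [hSdef, Finset.mem_filter] at hc
      show Fin.cons p (Fin.tail c) = c
      rw [← hc.2, Fin.cons_self_tail]
    · intro c _
      exact Fin.tail_cons _ _
    · intro c hc
      simp only [hSdef, Finset.mem_filter] at hc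
      rw [zw_ofFn_succ, hc.2]
  have E2 : ∑ c ∈ (S.filter (fun c => ¬ c 0 = p)).filter (fun c => c 0 = 2*p), zw (List.ofFn c)
      = (if j = 0 then (0:A) else z (2*p) * T p N' s (j-1)) := by
    rcases j with _ | j'
    · rw [if_pos rfl]
      apply Finset.sum_eq_zero
      intro c hc
      exfalso
      simp only [hSdef, Finset.mem_filter, Finset.Nat.mem_antidiagonalTuple] at hc
      obtain ⟨⟨⟨hsum, hdvd, hcard⟩, hne⟩, hc0⟩ := hc
      have hmem : (0 : Fin (N'+1)) ∈ Finset.univ.filter (fun r => 2*p ∣ c r) := by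
        rw [Finset.mem_filter]
        exact ⟨Finset.mem_univ _, by rw [hc0]⟩
      have := Finset.card_pos.mpr ⟨_, hmem⟩
      omega
    · rw [if_neg (by omega), Nat.succ_sub_one, T, Finset.mul_sum]
      refine Finset.sum_nbij' (fun c => Fin.tail c) (fun c => Fin.cons (2*p) c) ?_ ?_ ?_ ?_ ?_
      · intro c hc
        simp only [hSdef, Finset.mem_filter, Finset.Nat.mem_antidiagonalTuple] at hc ⊢
        obtain ⟨⟨⟨hsum, hdvd, hcard⟩, hne⟩, hc0⟩ := hc
        refine ⟨?_, fun r => hdvd r.succ, ?_⟩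
        · have h2 := Fin.sum_univ_succ c
          rw [hsum, hc0] at h2
          have h3 : ∑ i : Fin N', Fin.tail c i = ∑ i : Fin N', c i.succ := rfl
          have e1 : (s+2)*p = s*p + 2*p := by ring
          omega
        · rw [card_filter_succ (fun r : Fin (N'+1) => 2*p ∣ c r)] at hcard
          rw [hc0, if_pos dvd_rfl] at hcard
          have h3 : (Finset.univ.filter fun r : Fin N' => 2*p ∣ Fin.tail c r)
              = (Finset.univ.filter fun r : Fin N' => 2*p ∣ c r.succ) := rfl
          rw [h3]
          omega
      · intro c hc
        simp only [hSdef, Finset.mem_filter, Finset.Nat.mem_antidiagonalTuple] at hc ⊢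
        obtain ⟨hsum, hdvd, hcard⟩ := hc
        have hzero : Fin.cons (α := fun _ => ℕ) (2*p) c 0 = 2*p := Fin.cons_zero _ _
        refine ⟨⟨⟨?_, ?_, ?_⟩, by rw [hzero]; omega⟩, hzero⟩
        · rw [Fin.sum_univ_succ]
          simp only [Fin.cons_zero, Fin.cons_succ]
          rw [hsum]
          have e1 : (s+2)*p = s*p + 2*p := by ring
          omega
        · intro r
          refine Fin.cases ?_ ?_ r
          · simp only [Fin.cons_zero]
            exact ⟨dvd_mul_left p 2, by omega⟩
          · intro i
            simpa using hdvd i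
        · rw [card_filter_succ (fun r : Fin (N'+1) => 2*p ∣ (Fin.cons (α := fun _ => ℕ) (2*p) c) r)]
          rw [show (Fin.cons (α := fun _ => ℕ) (2*p) c 0) = 2*p from Fin.cons_zero _ _]
          rw [if_pos dvd_rfl]
          have h3 : (Finset.univ.filter fun r : Fin N' => 2*p ∣ Fin.cons (α := fun _ => ℕ) (2*p) c r.succ)
              = (Finset.univ.filter fun r : Fin N' => 2*p ∣ c r) := by
            apply Finset.filter_congr
            intro r _
            rw [Fin.cons_succ]
          rw [h3, hcard]
          omega
      · intro c hc
        simp only [hSdef, Finset.mem_filter] at hc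
        show Fin.cons (2*p) (Fin.tail c) = c
        rw [← hc.2, Fin.cons_self_tail]
      · intro c _
        exact Fin.tail_cons _ _
      · intro c hc
        simp only [hSdef, Finset.mem_filter] at hc
        rw [zw_ofFn_succ, hc.2]
  have E3 : ∑ c ∈ (S.filter (fun c => ¬ c 0 = p)).filter (fun c => ¬ c 0 = 2*p), zw (List.ofFn c)
      = Xg ^ (2*p) * T p (N'+1) s j := by
    rw [T, Finset.mul_sum]
    have key : ∀ c : Fin (N'+1) → ℕ,
        c ∈ (S.filter (fun c => ¬ c 0 = p)).filter (fun c => ¬ c 0 = 2*p) → 2*p + 1 ≤ c 0 := by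
      intro c hc
      simp only [hSdef, Finset.mem_filter] at hc
      obtain ⟨⟨⟨_, hdvd, _⟩, hne1⟩, hne2⟩ := hc
      exact ge_three hp _ (hdvd 0).1 (hdvd 0).2 hne1 hne2
    refine Finset.sum_nbij' (fun c => Fin.cons (c 0 - 2*p) (Fin.tail c))
      (fun c => Fin.cons (c 0 + 2*p) (Fin.tail c)) ?_ ?_ ?_ ?_ ?_
    · intro c hc
      have hge := key c hc
      simp only [hSdef, Finset.mem_filter, Finset.Nat.mem_antidiagonalTuple] at hc ⊢
      obtain ⟨⟨⟨hsum, hdvd, hcard⟩, hne1⟩, hne2⟩ := hc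
      refine ⟨?_, ?_, ?_⟩
      · rw [Fin.sum_univ_succ]
        simp only [Fin.cons_zero, Fin.cons_succ]
        have h2 := Fin.sum_univ_succ c
        rw [hsum] at h2
        have h3 : ∑ i : Fin N', Fin.tail c i = ∑ i : Fin N', c i.succ := rfl
        have e1 : (s+2)*p = s*p + 2*p := by ring
        omega
      · intro r
        refine Fin.cases ?_ ?_ r
        · simp only [Fin.cons_zero]
          exact ⟨Nat.dvd_sub (hdvd 0).1 (dvd_mul_left p 2), by omega⟩
        · intro i
          simpa [Fin.tail] using hdvd i.succ
      · rw [card_filter_succ (fun r : Fin (N'+1) =>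
          2*p ∣ (Fin.cons (α := fun _ => ℕ) (c 0 - 2*p) (Fin.tail c)) r)]
        rw [card_filter_succ (fun r : Fin (N'+1) => 2*p ∣ c r)] at hcard
        have hiff : (2*p ∣ c 0 - 2*p) ↔ (2*p ∣ c 0) := by
          constructor
          · intro hd
            have : c 0 = (c 0 - 2*p) + 2*p := by omega
            rw [this]
            exact Nat.dvd_add hd dvd_rfl
          · intro hd
            exact Nat.dvd_sub hd dvd_rfl
        rw [show (Fin.cons (α := fun _ => ℕ) (c 0 - 2*p) (Fin.tail c)) 0 = c 0 - 2*p
          from Fin.cons_zero _ _]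
        have h3 : (Finset.univ.filter fun r : Fin N' =>
            2*p ∣ Fin.cons (α := fun _ => ℕ) (c 0 - 2*p) (Fin.tail c) r.succ)
            = (Finset.univ.filter fun r : Fin N' => 2*p ∣ c r.succ) := by
          apply Finset.filter_congr
          intro r _
          rw [Fin.cons_succ]
          rfl
        rw [h3]
        by_cases hd : 2*p ∣ c 0
        · rw [if_pos (hiff.mpr hd)]
          rw [if_pos hd] at hcard
          omega
        · rw [if_neg (fun h => hd (hiff.mp h))]
          rw [if_neg hd] at hcard
          omega
    · intro c hc
      simp only [hSdef, Finset.mem_filter, Finset.Nat.mem_antidiagonalTuple] at hc ⊢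
      obtain ⟨hsum, hdvd, hcard⟩ := hc
      have hc0 : p ≤ c 0 := Nat.le_of_dvd (Nat.pos_of_ne_zero (hdvd 0).2) (hdvd 0).1
      have hzero : Fin.cons (α := fun _ => ℕ) (c 0 + 2*p) (Fin.tail c) 0 = c 0 + 2*p :=
        Fin.cons_zero _ _
      refine ⟨⟨⟨?_, ?_, ?_⟩, by rw [hzero]; omega⟩, by rw [hzero]; omega⟩
      · rw [Fin.sum_univ_succ]
        simp only [Fin.cons_zero, Fin.cons_succ]
        have h2 := Fin.sum_univ_succ c
        rw [hsum] at h2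
        have h3 : ∑ i : Fin N', Fin.tail c i = ∑ i : Fin N', c i.succ := rfl
        have e1 : (s+2)*p = s*p + 2*p := by ring
        omega
      · intro r
        refine Fin.cases ?_ ?_ r
        · simp only [Fin.cons_zero]
          exact ⟨Nat.dvd_add (hdvd 0).1 (dvd_mul_left p 2), by omega⟩
        · intro i
          simpa [Fin.tail] using hdvd i.succ
      · rw [card_filter_succ (fun r : Fin (N'+1) =>
          2*p ∣ (Fin.cons (α := fun _ => ℕ) (c 0 + 2*p) (Fin.tail c)) r)]
        rw [card_filter_succ (fun r : Fin (N'+1) => 2*p ∣ c r)] at hcard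
        have hiff : (2*p ∣ c 0 + 2*p) ↔ (2*p ∣ c 0) := by
          constructor
          · intro hd
            have := Nat.dvd_sub hd (dvd_refl (2*p))
            simpa using this
          · intro hd
            exact Nat.dvd_add hd dvd_rfl
        rw [show (Fin.cons (α := fun _ => ℕ) (c 0 + 2*p) (Fin.tail c)) 0 = c 0 + 2*p
          from Fin.cons_zero _ _]
        have h3 : (Finset.univ.filter fun r : Fin N' =>
            2*p ∣ Fin.cons (α := fun _ => ℕ) (c 0 + 2*p) (Fin.tail c) r.succ)
            = (Finset.univ.filter fun r : Fin N' => 2*p ∣ c r.succ) := by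
          apply Finset.filter_congr
          intro r _
          rw [Fin.cons_succ]
          rfl
        rw [h3]
        by_cases hd : 2*p ∣ c 0
        · rw [if_pos (hiff.mpr hd)]
          rw [if_pos hd] at hcard
          omega
        · rw [if_neg (fun h => hd (hiff.mp h))]
          rw [if_neg hd] at hcard
          omega
    · intro c hc
      have hge := key c hc
      show Fin.cons (Fin.cons (α := fun _ => ℕ) (c 0 - 2*p) (Fin.tail c) 0 + 2*p)
        (Fin.tail (Fin.cons (c 0 - 2*p) (Fin.tail c))) = c
      rw [Fin.cons_zero, Fin.tail_cons]
      have : c 0 - 2*p + 2*p = c 0 := by omega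
      rw [this, Fin.cons_self_tail]
    · intro c hc
      show Fin.cons (Fin.cons (α := fun _ => ℕ) (c 0 + 2*p) (Fin.tail c) 0 - 2*p)
        (Fin.tail (Fin.cons (c 0 + 2*p) (Fin.tail c))) = c
      rw [Fin.cons_zero, Fin.tail_cons]
      have : c 0 + 2*p - 2*p = c 0 := by omega
      rw [this, Fin.cons_self_tail]
    · intro c hc
      have hge := key c hc
      rw [zw_ofFn_succ, zw_ofFn_succ (Fin.cons (c 0 - 2*p) (Fin.tail c))]
      rw [show (Fin.cons (α := fun _ => ℕ) (c 0 - 2*p) (Fin.tail c)) 0 = c 0 - 2*p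
        from Fin.cons_zero _ _]
      rw [Fin.tail_cons, z_split p (c 0) hge, mul_assoc]
  rw [E1, E2, E3]
  exact (add_assoc _ _ _).symm

lemma T_rec' (N s j : ℕ) (hs : 1 ≤ s) :
    T p N (s+2) j = z p * T p (N-1) (s+1) j
      + (if j = 0 then (0:A) else z (2*p) * T p (N-1) s (j-1))
      + Xg ^ (2*p) * T p N s j := by
  rcases N with _ | N'
  · rw [T_zero_left hp (by omega), T_zero_left hp (by omega), T_zero_left hp (by omega),
      T_zero_left hp (by omega)]
    simp
  · simpa using T_rec hp N' s j hs


end P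

/-- canonical form of the RHS -/
def F (p m n : ℕ) : A :=
  ∑ k ∈ Finset.range (min m n + 1),
    ∑ ij ∈ Finset.HasAntidiagonal.antidiagonal k,
      (((m + n - 2 * k).choose (m - k) : R) * (tp ^ 2 - tp) ^ ij.1 * (1 - 2 * tp) ^ ij.2) •
        T p (m + n - ij.1 - k) (m + n) ij.2

section P3
variable {p : ℕ} (hp : 1 ≤ p)
include hp

lemma F_right_zero (m : ℕ) : F p m 0 = zw (List.replicate m p) := by
  rw [F]
  rw [Nat.min_zero, Finset.sum_range_one, Finset.Nat.antidiagonal_zero, Finset.sum_singleton]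
  simp only [Nat.add_zero, Nat.mul_zero, Nat.sub_zero, Nat.choose_self, pow_zero, Nat.cast_one,
    mul_one, one_smul]
  exact T_diag hp m

lemma F_left_zero (n : ℕ) : F p 0 n = zw (List.replicate n p) := by
  rw [F]
  rw [Nat.zero_min, Finset.sum_range_one, Finset.Nat.antidiagonal_zero, Finset.sum_singleton]
  simp only [Nat.zero_add, Nat.mul_zero, Nat.sub_zero, Nat.zero_sub, Nat.choose_zero_right,
    pow_zero, Nat.cast_one, mul_one, one_smul]
  exact T_diag hp n

end P3

section P4
variable {p : ℕ} (hp : 1 ≤ p)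
include hp

lemma F_recB (m n : ℕ) :
    (∑ k ∈ Finset.range (min m n + 1 + 1), ∑ ij ∈ Finset.HasAntidiagonal.antidiagonal k,
      (((m + n + 2 - 2 * k).choose (m + 1 - k) : R) * (tp ^ 2 - tp) ^ ij.1
          * (1 - 2 * tp) ^ ij.2) •
        (if ij.2 = 0 then (0:A)
          else z (2*p) * T p (m + n + 1 - ij.1 - k) (m + n) (ij.2 - 1)))
      = (1 - 2 * tp) • (z (2*p) * F p m n) := by
  rw [Finset.sum_range_succ']
  rw [Finset.Nat.antidiagonal_zero, Finset.sum_singleton]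
  rw [if_pos rfl, smul_zero, add_zero]
  simp only [F, Finset.mul_sum, Finset.smul_sum, mul_smul_comm, smul_smul]
  refine Finset.sum_congr rfl fun k hk => ?_
  rw [Finset.Nat.sum_antidiagonal_succ']
  dsimp only
  rw [if_pos rfl, smul_zero, zero_add]
  refine Finset.sum_congr rfl fun ij hij => ?_
  rw [if_neg (Nat.succ_ne_zero ij.2)]
  rw [show m+n+2-2*(k+1) = m+n-2*k from by omega,
      show m+1-(k+1) = m-k from by omega,
      show m+n+1-ij.1-(k+1) = m+n-ij.1-k from by omega,
      Nat.add_sub_cancel]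
  congr 1
  ring

lemma F_recC (m n : ℕ) :
    (∑ k ∈ Finset.range (min m n + 1 + 1), ∑ ij ∈ Finset.HasAntidiagonal.antidiagonal k,
      (((m + n + 2 - 2 * k).choose (m + 1 - k) : R) * (tp ^ 2 - tp) ^ ij.1
          * (1 - 2 * tp) ^ ij.2) •
        (Xg ^ (2*p) * T p (m + n + 2 - ij.1 - k) (m + n) ij.2))
      = (tp ^ 2 - tp) • (Xg ^ (2*p) * F p m n) := by
  rw [Finset.sum_range_succ']
  rw [Finset.Nat.antidiagonal_zero, Finset.sum_singleton]
  dsimp only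
  rw [show m+n+2-(0:ℕ)-(0:ℕ) = m+n+2 from by omega, T_small hp (by omega)]
  simp only [mul_zero, smul_zero, add_zero]
  simp only [F, Finset.mul_sum, Finset.smul_sum, mul_smul_comm, smul_smul]
  refine Finset.sum_congr rfl fun k hk => ?_
  rw [Finset.Nat.sum_antidiagonal_succ]
  dsimp only
  rw [show m+n+2-(0:ℕ)-(k+1) = m+n+1-k from by omega, T_small hp (by omega)]
  simp only [mul_zero, smul_zero, zero_add]
  refine Finset.sum_congr rfl fun ij hij => ?_
  rw [show m+n+2-2*(k+1) = m+n-2*k from by omega,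
      show m+1-(k+1) = m-k from by omega,
      show m+n+2-(ij.1+1)-(k+1) = m+n-ij.1-k from by omega]
  congr 1
  ring

end P4

section P5
variable {p : ℕ} (hp : 1 ≤ p)
include hp

lemma F_recA (m n : ℕ) :
    (∑ k ∈ Finset.range (min m n + 1 + 1), ∑ ij ∈ Finset.HasAntidiagonal.antidiagonal k,
      (((m + n + 2 - 2 * k).choose (m + 1 - k) : R) * (tp ^ 2 - tp) ^ ij.1
          * (1 - 2 * tp) ^ ij.2) •
        (z p * T p (m + n + 1 - ij.1 - k) (m + n + 1) ij.2))
      = z p * F p m (n+1) + z p * F p (m+1) n := by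
  simp only [F, Finset.mul_sum, mul_smul_comm]
  simp only [show m+(n+1) = m+n+1 from by omega, show m+1+n = m+n+1 from by omega]
  have pascal : ∀ k, k ≤ min m n →
      (((m+n+2-2*k).choose (m+1-k) : ℕ) : R)
        = (((m+n+1-2*k).choose (m-k) : ℕ) : R) + (((m+n+1-2*k).choose (m+1-k) : ℕ) : R) := by
    intro k hk
    rw [show m+n+2-2*k = (m+n+1-2*k)+1 from by omega, show m+1-k = (m-k)+1 from by omega,
      Nat.choose_succ_succ]
    push_cast
    ring
  have main : ∀ K, K ≤ min m n + 1 →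
      (∑ k ∈ Finset.range K, ∑ ij ∈ Finset.HasAntidiagonal.antidiagonal k,
        (((m+n+2-2*k).choose (m+1-k) : R) * (tp^2-tp)^ij.1 * (1-2*tp)^ij.2) •
          (z p * T p (m+n+1-ij.1-k) (m+n+1) ij.2))
      = (∑ k ∈ Finset.range K, ∑ ij ∈ Finset.HasAntidiagonal.antidiagonal k,
        (((m+n+1-2*k).choose (m-k) : R) * (tp^2-tp)^ij.1 * (1-2*tp)^ij.2) •
          (z p * T p (m+n+1-ij.1-k) (m+n+1) ij.2))
      + (∑ k ∈ Finset.range K, ∑ ij ∈ Finset.HasAntidiagonal.antidiagonal k,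
        (((m+n+1-2*k).choose (m+1-k) : R) * (tp^2-tp)^ij.1 * (1-2*tp)^ij.2) •
          (z p * T p (m+n+1-ij.1-k) (m+n+1) ij.2)) := by
    intro K hK
    rw [← Finset.sum_add_distrib]
    refine Finset.sum_congr rfl fun k hk => ?_
    rw [← Finset.sum_add_distrib]
    refine Finset.sum_congr rfl fun ij hij => ?_
    have hk' := Finset.mem_range.mp hk
    rw [pascal k (by omega), add_mul, add_mul, add_smul]
  rcases Nat.lt_trichotomy m n with h | h | h
  · simp only [show min m n = m from by omega, show min m (n+1) = m from by omega,
      show min (m+1) n = m+1 from by omega]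
    rw [Finset.sum_range_succ (fun k => ∑ ij ∈ Finset.HasAntidiagonal.antidiagonal k,
      ((((m+n+2-2*k).choose (m+1-k) : ℕ) : R) * (tp^2-tp)^ij.1 * (1-2*tp)^ij.2) •
        (z p * T p (m+n+1-ij.1-k) (m+n+1) ij.2)) (m+1),
      Finset.sum_range_succ (fun k => ∑ ij ∈ Finset.HasAntidiagonal.antidiagonal k,
      ((((m+n+1-2*k).choose (m+1-k) : ℕ) : R) * (tp^2-tp)^ij.1 * (1-2*tp)^ij.2) •
        (z p * T p (m+n+1-ij.1-k) (m+n+1) ij.2)) (m+1),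
      main (m+1) (by omega)]
    have last : (∑ ij ∈ Finset.HasAntidiagonal.antidiagonal (m+1),
        (((m+n+2-2*(m+1)).choose (m+1-(m+1)) : R) * (tp^2-tp)^ij.1 * (1-2*tp)^ij.2) •
          (z p * T p (m+n+1-ij.1-(m+1)) (m+n+1) ij.2))
        = (∑ ij ∈ Finset.HasAntidiagonal.antidiagonal (m+1),
        (((m+n+1-2*(m+1)).choose (m+1-(m+1)) : R) * (tp^2-tp)^ij.1 * (1-2*tp)^ij.2) •
          (z p * T p (m+n+1-ij.1-(m+1)) (m+n+1) ij.2)) := by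
      refine Finset.sum_congr rfl fun ij hij => ?_
      rw [show m+1-(m+1) = 0 from by omega, Nat.choose_zero_right, Nat.choose_zero_right]
    rw [last]
    abel
  · subst h
    simp only [show min m m = m from by omega, show min m (m+1) = m from by omega,
      show min (m+1) m = m from by omega]
    rw [Finset.sum_range_succ]
    have last0 : (∑ ij ∈ Finset.HasAntidiagonal.antidiagonal (m+1),
        (((m+m+2-2*(m+1)).choose (m+1-(m+1)) : R) * (tp^2-tp)^ij.1 * (1-2*tp)^ij.2) •
          (z p * T p (m+m+1-ij.1-(m+1)) (m+m+1) ij.2)) = 0 := by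
      refine Finset.sum_eq_zero fun ij hij => ?_
      have hij' := Finset.HasAntidiagonal.mem_antidiagonal.mp hij
      by_cases hj : ij.2 = 0
      · rw [show m+m+1-ij.1-(m+1) = 0 from by omega, hj, T_zero_left hp (by omega), mul_zero,
          smul_zero]
      · rw [T_card hp (by omega), mul_zero, smul_zero]
    rw [last0, add_zero, main (m+1) (by omega)]
  · simp only [show min m n = n from by omega, show min m (n+1) = n+1 from by omega,
      show min (m+1) n = n from by omega]
    rw [Finset.sum_range_succ (fun k => ∑ ij ∈ Finset.HasAntidiagonal.antidiagonal k,
      ((((m+n+2-2*k).choose (m+1-k) : ℕ) : R) * (tp^2-tp)^ij.1 * (1-2*tp)^ij.2) •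
        (z p * T p (m+n+1-ij.1-k) (m+n+1) ij.2)) (n+1),
      Finset.sum_range_succ (fun k => ∑ ij ∈ Finset.HasAntidiagonal.antidiagonal k,
      ((((m+n+1-2*k).choose (m-k) : ℕ) : R) * (tp^2-tp)^ij.1 * (1-2*tp)^ij.2) •
        (z p * T p (m+n+1-ij.1-k) (m+n+1) ij.2)) (n+1),
      main (n+1) (by omega)]
    have last : (∑ ij ∈ Finset.HasAntidiagonal.antidiagonal (n+1),
        (((m+n+2-2*(n+1)).choose (m+1-(n+1)) : R) * (tp^2-tp)^ij.1 * (1-2*tp)^ij.2) •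
          (z p * T p (m+n+1-ij.1-(n+1)) (m+n+1) ij.2))
        = (∑ ij ∈ Finset.HasAntidiagonal.antidiagonal (n+1),
        (((m+n+1-2*(n+1)).choose (m-(n+1)) : R) * (tp^2-tp)^ij.1 * (1-2*tp)^ij.2) •
          (z p * T p (m+n+1-ij.1-(n+1)) (m+n+1) ij.2)) := by
      refine Finset.sum_congr rfl fun ij hij => ?_
      rw [show m+n+2-2*(n+1) = m-n from by omega, show m+1-(n+1) = m-n from by omega,
        show m+n+1-2*(n+1) = m-n-1 from by omega, show m-(n+1) = m-n-1 from by omega,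
        Nat.choose_self, Nat.choose_self]
    rw [last]
    abel

end P5

section P6
variable {p : ℕ} (hp : 1 ≤ p)
include hp

lemma F_rec (m n : ℕ) (hmn : 1 ≤ m + n) :
    F p (m+1) (n+1) = z p * F p m (n+1) + z p * F p (m+1) n
      + (1 - 2*tp) • (z (2*p) * F p m n) + (tp^2 - tp) • (Xg ^ (2*p) * F p m n) := by
  have e0 : F p (m+1) (n+1) = ∑ k ∈ Finset.range (min m n + 1 + 1),
      ∑ ij ∈ Finset.HasAntidiagonal.antidiagonal k,
      (((m+n+2-2*k).choose (m+1-k) : R) * (tp^2-tp)^ij.1 * (1-2*tp)^ij.2) •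
        T p (m+n+2-ij.1-k) (m+n+2) ij.2 := by
    rw [F]
    simp only [show m+1+(n+1) = m+n+2 from by omega,
      show min (m+1) (n+1) = min m n + 1 from by omega]
  have e1 : ∀ (k : ℕ) (ij : ℕ × ℕ), T p (m+n+2-ij.1-k) (m+n+2) ij.2
      = z p * T p (m+n+1-ij.1-k) (m+n+1) ij.2
        + (if ij.2 = 0 then (0:A) else z (2*p) * T p (m+n+1-ij.1-k) (m+n) (ij.2-1))
        + Xg ^ (2*p) * T p (m+n+2-ij.1-k) (m+n) ij.2 := by
    intro k ij
    have h := T_rec' hp (m+n+2-ij.1-k) (m+n) ij.2 hmn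
    rw [show m+n+2-ij.1-k-1 = m+n+1-ij.1-k from by omega] at h
    exact h
  have e2 : F p (m+1) (n+1)
      = (∑ k ∈ Finset.range (min m n + 1 + 1), ∑ ij ∈ Finset.HasAntidiagonal.antidiagonal k,
          (((m+n+2-2*k).choose (m+1-k) : R) * (tp^2-tp)^ij.1 * (1-2*tp)^ij.2) •
            (z p * T p (m+n+1-ij.1-k) (m+n+1) ij.2))
        + (∑ k ∈ Finset.range (min m n + 1 + 1), ∑ ij ∈ Finset.HasAntidiagonal.antidiagonal k,
          (((m+n+2-2*k).choose (m+1-k) : R) * (tp^2-tp)^ij.1 * (1-2*tp)^ij.2) •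
            (if ij.2 = 0 then (0:A)
              else z (2*p) * T p (m+n+1-ij.1-k) (m+n) (ij.2-1)))
        + (∑ k ∈ Finset.range (min m n + 1 + 1), ∑ ij ∈ Finset.HasAntidiagonal.antidiagonal k,
          (((m+n+2-2*k).choose (m+1-k) : R) * (tp^2-tp)^ij.1 * (1-2*tp)^ij.2) •
            (Xg ^ (2*p) * T p (m+n+2-ij.1-k) (m+n) ij.2)) := by
    rw [e0]
    calc _ = ∑ k ∈ Finset.range (min m n + 1 + 1), ∑ ij ∈ Finset.HasAntidiagonal.antidiagonal k,
        ((((m+n+2-2*k).choose (m+1-k) : R) * (tp^2-tp)^ij.1 * (1-2*tp)^ij.2) •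
            (z p * T p (m+n+1-ij.1-k) (m+n+1) ij.2)
          + (((m+n+2-2*k).choose (m+1-k) : R) * (tp^2-tp)^ij.1 * (1-2*tp)^ij.2) •
            (if ij.2 = 0 then (0:A)
              else z (2*p) * T p (m+n+1-ij.1-k) (m+n) (ij.2-1))
          + (((m+n+2-2*k).choose (m+1-k) : R) * (tp^2-tp)^ij.1 * (1-2*tp)^ij.2) •
            (Xg ^ (2*p) * T p (m+n+2-ij.1-k) (m+n) ij.2)) := by
          refine Finset.sum_congr rfl fun k hk => Finset.sum_congr rfl fun ij hij => ?_
          rw [e1 k ij, smul_add, smul_add]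
      _ = _ := by simp only [Finset.sum_add_distrib]
  rw [e2, F_recA hp m n, F_recB hp m n, F_recC hp m n]

lemma T_one2 : T p 1 2 1 = zw [2*p] := by
  have hone : Finset.Nat.antidiagonalTuple 1 (2 * p) = {![2*p]} :=
    Finset.Nat.antidiagonalTuple_one (2*p)
  rw [T, hone, Finset.filter_singleton, if_pos, Finset.sum_singleton]
  · have : List.ofFn ![2*p] = [2*p] := by simp
    rw [this]
  · constructor
    · intro r
      have hr : (![2*p]) r = 2*p := by
        have : r = 0 := Subsingleton.elim r 0
        rw [this]
        rfl
      rw [hr]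
      exact ⟨dvd_mul_left p 2, by omega⟩
    · rw [Finset.filter_true_of_mem]
      · simp
      · intro r _
        have hr : (![2*p]) r = 2*p := by
          have : r = 0 := Subsingleton.elim r 0
          rw [this]
          rfl
        rw [hr]

lemma F_rec00 : F p 1 1 = z p * F p 0 1 + z p * F p 1 0
    + (1 - 2*tp) • (z (2*p) * F p 0 0) := by
  rw [F_left_zero hp, F_right_zero hp,
    show F p 0 0 = zw (List.replicate 0 p) from F_right_zero hp 0]
  rw [F]
  rw [show min 1 1 + 1 = 1 + 1 from rfl, Finset.sum_range_succ, Finset.sum_range_one]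
  rw [Finset.Nat.antidiagonal_zero, Finset.sum_singleton]
  rw [Finset.Nat.sum_antidiagonal_succ]
  rw [Finset.Nat.antidiagonal_zero, Finset.sum_singleton]
  dsimp only
  norm_num
  rw [T_one2 hp, T_zero_left hp (by omega), T_diag hp 2]
  rw [smul_zero, add_zero]
  rw [show List.replicate 2 p = [p, p] from rfl]
  simp only [zw_cons, zw_nil, mul_one]
  rw [two_smul]

end P6

lemma tst_nil_left (w : List ℕ) : tst [] w = zw w := by rw [tst]

lemma tst_cons_nil (k : ℕ) (w : List ℕ) : tst (k :: w) [] = zw (k :: w) := by rw [tst]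

lemma tst_cons_cons (k l : ℕ) (w₁ w₂ : List ℕ) :
    tst (k :: w₁) (l :: w₂) =
      z k * tst w₁ (l :: w₂) + z l * tst (k :: w₁) w₂
        + (1 - 2 * tp) • (z (k + l) * tst w₁ w₂)
        + (if w₁ = [] ∧ w₂ = [] then (0 : R) else tp ^ 2 - tp) • (Xg ^ (k + l) * tst w₁ w₂) := by
  rw [tst]

section P7
variable {p : ℕ} (hp : 1 ≤ p)
include hp

lemma key : ∀ (fuel m n : ℕ), m + n ≤ fuel →
    tst (List.replicate m p) (List.replicate n p) = F p m n := by
  intro fuel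
  induction fuel with
  | zero =>
    intro m n h
    obtain ⟨rfl, rfl⟩ : m = 0 ∧ n = 0 := by omega
    rw [show List.replicate 0 p = ([] : List ℕ) from rfl, tst_nil_left, F_left_zero hp]
    rfl
  | succ f ih =>
    intro m n h
    match m, n with
    | 0, n =>
      rw [show List.replicate 0 p = ([] : List ℕ) from rfl, tst_nil_left, F_left_zero hp]
    | m+1, 0 =>
      rw [show List.replicate 0 p = ([] : List ℕ) from rfl, List.replicate_succ, tst_cons_nil,
        ← List.replicate_succ, F_right_zero hp]
    | m+1, n+1 =>
      rw [List.replicate_succ, List.replicate_succ, tst_cons_cons]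
      rw [← List.replicate_succ, ← List.replicate_succ]
      rw [ih m (n+1) (by omega), ih (m+1) n (by omega), ih m n (by omega)]
      by_cases h00 : m = 0 ∧ n = 0
      · obtain ⟨rfl, rfl⟩ := h00
        rw [if_pos ⟨rfl, rfl⟩]
        rw [zero_smul, add_zero, show p + p = 2*p from by ring]
        exact (F_rec00 hp).symm
      · rw [if_neg (fun hcon => h00 ⟨by simpa using hcon.1, by simpa using hcon.2⟩)]
        rw [show p + p = 2*p from by ring]
        exact (F_rec hp m n (by omega)).symm

end P7


/-- Lemma 2 / eq. (7): for m, n ≥ 0 and p ≥ 1,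
`z_p^m ⋆_t z_p^n = Σ_{0≤k≤min(m,n)} Σ_{i+j=k} C(m+n-2k, m-k) (t²-t)^i (1-2t)^j
  Σ z_{a₁}⋯z_{a_{n+m-i-k}}`, the inner sum over sequences of positive multiples of `p`
summing to `(n+m)p` with exactly `j` entries an even multiple of `p`. -/
theorem lemma1 (m n p : ℕ) (hp : 1 ≤ p) :
    tst (List.replicate m p) (List.replicate n p) =
      ∑ k ∈ Finset.range (min m n + 1),
        ∑ ij ∈ Finset.HasAntidiagonal.antidiagonal k,
          (((m + n - 2 * k).choose (m - k) : R) * (tp ^ 2 - tp) ^ ij.1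
              * (1 - 2 * tp) ^ ij.2) •
            ∑ c ∈ (Finset.Nat.antidiagonalTuple (n + m - ij.1 - k) ((n + m) * p)).filter
                (fun c => (∀ r, p ∣ c r ∧ c r ≠ 0) ∧
                  (Finset.univ.filter fun r => 2 * p ∣ c r).card = ij.2),
              zw (List.ofFn c) := by
  rw [key hp (m+n) m n le_rfl, F]
  refine Finset.sum_congr rfl fun k hk => Finset.sum_congr rfl fun ij hij => ?_
  rw [T, Nat.add_comm n m]
end
end

section
/- Let p ≥ 2 and k ≥ 0 be integers with k even. Then Σ_{m+n=k, m,n ≥ 0} (−1)^m ζ({p}^m) ζ({p}^n) = (−1)^{k/2} ζ({2p}^{k/2}). -/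
noncomputable section

open Finset Polynomial

/-- The multiple zeta value `ζ(k₁,…,kₙ)`, as a sum over strictly decreasing tuples
`m₁ > m₂ > ⋯ > mₙ ≥ 1`; the empty index gives `ζ() = 1`. -/
def mzv (ks : List ℕ) : ℝ :=
  ∑' f : {f : Fin ks.length → ℕ //
      (∀ i j : Fin ks.length, i < j → f j < f i) ∧ ∀ i, 1 ≤ f i},
    ∏ i, (1 : ℝ) / (f.1 i : ℝ) ^ ks.get i

namespace MzvAux

/-- weight function -/
def w (q : ℕ) (i : ℕ) : ℝ := 1 / (i : ℝ) ^ q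

lemma w_nonneg (q i : ℕ) : 0 ≤ w q i := by unfold w; positivity

lemma summable_w {q : ℕ} (hq : 2 ≤ q) : Summable (w q) := by
  unfold w
  simp only [one_div]
  exact (Real.summable_nat_pow_inv).mpr (by omega)

lemma w_sq (p i : ℕ) : w p i * w p i = w (2 * p) i := by
  unfold w
  rw [div_mul_div_comm, one_mul, ← pow_add, two_mul]

lemma summable_pi (g : ℕ → ℝ) (hg : Summable g) (h0 : ∀ i, 0 ≤ g i) (n : ℕ) :
    Summable (fun f : Fin n → ℕ => ∏ i, g (f i)) := by
  induction n with
  | zero => exact Summable.of_finite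
  | succ n ih =>
    have key : Summable (fun x : ℕ × (Fin n → ℕ) => g x.1 * ∏ i, g (x.2 i)) :=
      Summable.mul_of_nonneg (f := g) (g := fun f : Fin n → ℕ => ∏ i, g (f i)) hg ih
        (fun i => h0 i) (fun f => Finset.prod_nonneg fun i _ => h0 _)
    have heq : ((fun f : Fin (n+1) → ℕ => ∏ i, g (f i)) ∘ (Fin.consEquiv (fun _ => ℕ))) =
        fun x : ℕ × (Fin n → ℕ) => g x.1 * ∏ i, g (x.2 i) := by
      funext x
      simp [Fin.consEquiv, Fin.prod_univ_succ]
    exact (Fin.consEquiv (fun _ : Fin (n+1) => ℕ)).summable_iff.mp (heq ▸ key)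

lemma desc_inj {n : ℕ} {f : Fin n → ℕ} (hf : ∀ i j : Fin n, i < j → f j < f i) :
    Function.Injective f := by
  intro i j hij
  rcases lt_trichotomy i j with h | h | h
  · exact absurd hij (by have := hf i j h; omega)
  · exact h
  · exact absurd hij (by have := hf j i h; omega)

/-- The type of strictly decreasing `n`-tuples of positive naturals. -/
abbrev Dn (n : ℕ) := {f : Fin n → ℕ // (∀ i j : Fin n, i < j → f j < f i) ∧ ∀ i, 1 ≤ f i}

/-- The type of `n`-element finsets of positive naturals. -/
abbrev A (n : ℕ) := {S : Finset ℕ // S.card = n ∧ 0 ∉ S}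

def descEquiv (n : ℕ) : Dn n ≃ A n where
  toFun f := ⟨Finset.image f.1 Finset.univ, by
      rw [Finset.card_image_of_injective _ (desc_inj f.2.1), Finset.card_univ,
        Fintype.card_fin], by
      simp only [Finset.mem_image, Finset.mem_univ, true_and]
      rintro ⟨i, hi⟩
      have := f.2.2 i
      omega⟩
  invFun S := ⟨fun i => S.1.orderEmbOfFin S.2.1 i.rev, by
      constructor
      · intro i j hij
        exact (S.1.orderEmbOfFin S.2.1).strictMono (Fin.rev_lt_rev.mpr hij)
      · intro i
        rcases Nat.eq_zero_or_pos (S.1.orderEmbOfFin S.2.1 i.rev) with h | h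
        · have hmem := Finset.orderEmbOfFin_mem S.1 S.2.1 i.rev
          rw [h] at hmem
          exact absurd hmem S.2.2
        · exact h⟩
  left_inv f := by
    obtain ⟨f, hf, hf1⟩ := f
    have hcard : (Finset.image f Finset.univ).card = n := by
      rw [Finset.card_image_of_injective _ (desc_inj hf), Finset.card_univ, Fintype.card_fin]
    have hmono : StrictMono (f ∘ Fin.rev) := by
      intro i j hij
      exact hf _ _ (Fin.rev_lt_rev.mpr hij)
    have hval : ∀ i, (f ∘ Fin.rev) i ∈ Finset.image f Finset.univ := by
      intro i; exact Finset.mem_image_of_mem f (Finset.mem_univ _)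
    have := Finset.orderEmbOfFin_unique hcard hval hmono
    apply Subtype.ext
    funext i
    show (Finset.image f Finset.univ).orderEmbOfFin _ i.rev = f i
    rw [← this]
    simp
  right_inv S := by
    obtain ⟨S, hS, hS0⟩ := S
    apply Subtype.ext
    show Finset.image (fun i : Fin n => S.orderEmbOfFin hS i.rev) Finset.univ = S
    apply Finset.eq_of_subset_of_card_le
    · intro x hx
      simp only [Finset.mem_image] at hx
      obtain ⟨i, _, rfl⟩ := hx
      exact Finset.orderEmbOfFin_mem S hS i.rev
    · rw [Finset.card_image_of_injective, Finset.card_univ, Fintype.card_fin, hS]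
      intro i j hij
      exact Fin.rev_injective ((S.orderEmbOfFin hS).injective hij)

lemma descEquiv_prod (n : ℕ) (g : ℕ → ℝ) (f : Dn n) :
    (∏ i ∈ (descEquiv n f).1, g i) = ∏ i, g (f.1 i) := by
  show (∏ i ∈ Finset.image f.1 Finset.univ, g i) = _
  rw [Finset.prod_image (fun i _ j _ h => desc_inj f.2.1 h)]

lemma mzv_of_const (ks : List ℕ) (q n : ℕ) (hlen : ks.length = n)
    (hks : ∀ i : Fin ks.length, ks.get i = q) :
    mzv ks = ∑' S : A n, ∏ i ∈ S.1, w q i := by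
  subst hlen
  unfold mzv
  rw [← Equiv.tsum_eq (descEquiv ks.length) (fun S : A ks.length => ∏ i ∈ S.1, w q i)]
  apply tsum_congr
  intro f
  rw [descEquiv_prod]
  apply Finset.prod_congr rfl
  intro i _
  rw [hks i]
  rfl

lemma summable_A {q : ℕ} (hq : 2 ≤ q) (n : ℕ) :
    Summable (fun S : A n => ∏ i ∈ S.1, w q i) := by
  rw [← (descEquiv n).summable_iff]
  have heq : ((fun S : A n => ∏ i ∈ S.1, w q i) ∘ descEquiv n) =
      fun f : Dn n => ∏ i, w q (f.1 i) := by
    funext f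
    exact descEquiv_prod n (w q) f
  rw [heq]
  exact (summable_pi (w q) (summable_w hq) (w_nonneg q) n).subtype
    {f : Fin n → ℕ | (∀ i j : Fin n, i < j → f j < f i) ∧ ∀ i, 1 ≤ f i}

lemma summable_A_norm {q : ℕ} (hq : 2 ≤ q) (n : ℕ) :
    Summable (fun S : A n => ‖∏ i ∈ S.1, w q i‖) := by
  have : (fun S : A n => ‖∏ i ∈ S.1, w q i‖) = fun S : A n => ∏ i ∈ S.1, w q i := by
    funext S
    rw [Real.norm_eq_abs, abs_of_nonneg (Finset.prod_nonneg fun i _ => w_nonneg q i)]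
  rw [this]
  exact summable_A hq n

/-- pairs of finsets of positive naturals with total cardinality `k` -/
abbrev QT (k : ℕ) := {st : Finset ℕ × Finset ℕ // st.1.card + st.2.card = k ∧ 0 ∉ st.1 ∧ 0 ∉ st.2}

def FF (p k : ℕ) (st : QT k) : ℝ :=
  (-1 : ℝ) ^ st.1.1.card * ((∏ i ∈ st.1.1, w p i) * ∏ i ∈ st.1.2, w p i)

def sigEquiv (k : ℕ) :
    (Σ mn : ↥(Finset.HasAntidiagonal.antidiagonal k), A mn.1.1 × A mn.1.2) ≃ QT k where
  toFun x := ⟨(x.2.1.1, x.2.2.1), by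
      obtain ⟨⟨⟨m, n⟩, hmn⟩, S, T⟩ := x
      exact ⟨by rw [S.2.1, T.2.1]; exact Finset.HasAntidiagonal.mem_antidiagonal.mp hmn, S.2.2, T.2.2⟩⟩
  invFun st := ⟨⟨(st.1.1.card, st.1.2.card), Finset.HasAntidiagonal.mem_antidiagonal.mpr st.2.1⟩,
    ⟨st.1.1, rfl, st.2.2.1⟩, ⟨st.1.2, rfl, st.2.2.2⟩⟩
  left_inv := by
    rintro ⟨⟨⟨m, n⟩, hmn⟩, ⟨S, hS1, hS⟩, ⟨T, hT1, hT⟩⟩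
    obtain rfl : S.card = m := hS1
    obtain rfl : T.card = n := hT1
    rfl
  right_inv := by rintro ⟨⟨S, T⟩, h⟩; rfl

def GG (p k : ℕ) (x : Σ mn : ↥(Finset.HasAntidiagonal.antidiagonal k), A mn.1.1 × A mn.1.2) : ℝ :=
  (-1 : ℝ) ^ (x.1.1.1 : ℕ) * ((∏ i ∈ x.2.1.1, w p i) * ∏ i ∈ x.2.2.1, w p i)

lemma FF_comp_sigEquiv (p k : ℕ) : (FF p k) ∘ (sigEquiv k) = GG p k := by
  funext x
  obtain ⟨⟨⟨m, n⟩, hmn⟩, S, T⟩ := x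
  show FF p k ⟨(S.1, T.1), _⟩ = _
  unfold FF GG
  simp only
  rw [S.2.1]

lemma summable_GG {p : ℕ} (hp : 2 ≤ p) (k : ℕ) : Summable (GG p k) := by
  rw [← summable_abs_iff]
  have habs : (fun x => |GG p k x|) =
      fun x : Σ mn : ↥(Finset.HasAntidiagonal.antidiagonal k), A mn.1.1 × A mn.1.2 =>
        (∏ i ∈ x.2.1.1, w p i) * ∏ i ∈ x.2.2.1, w p i := by
    funext x
    unfold GG
    rw [abs_mul, abs_pow, abs_neg, abs_one, one_pow, one_mul,
      abs_of_nonneg (mul_nonneg (Finset.prod_nonneg fun i _ => w_nonneg p i)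
        (Finset.prod_nonneg fun i _ => w_nonneg p i))]
  rw [habs]
  apply (summable_sigma_of_nonneg ?_).mpr ⟨?_, ?_⟩
  · intro x
    exact mul_nonneg (Finset.prod_nonneg fun i _ => w_nonneg p i)
      (Finset.prod_nonneg fun i _ => w_nonneg p i)
  · intro mn
    exact Summable.mul_of_nonneg (f := fun S : A mn.1.1 => ∏ i ∈ S.1, w p i)
      (g := fun T : A mn.1.2 => ∏ i ∈ T.1, w p i)
      (summable_A hp _) (summable_A hp _)
      (fun S => Finset.prod_nonneg fun i _ => w_nonneg p i)
      (fun T => Finset.prod_nonneg fun i _ => w_nonneg p i)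
  · exact Summable.of_finite

lemma summable_FF {p : ℕ} (hp : 2 ≤ p) (k : ℕ) : Summable (FF p k) := by
  rw [← (sigEquiv k).summable_iff]
  rw [FF_comp_sigEquiv]
  exact summable_GG hp k

end MzvAux

namespace MzvAux

lemma max_unbot'_mem {s : Finset ℕ} (h : s.Nonempty) : WithBot.unbotD 0 s.max ∈ s := by
  rw [← Finset.coe_max' h, WithBot.unbotD_coe]
  exact Finset.max'_mem s h

lemma symmDiff_move {S T : Finset ℕ} {a : ℕ} (haS : a ∈ S) (haT : a ∉ T) :
    symmDiff (S.erase a) (insert a T) = symmDiff S T := by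
  ext x
  simp only [Finset.mem_symmDiff, Finset.mem_erase, Finset.mem_insert]
  rcases eq_or_ne x a with rfl | hx
  · simp [haS, haT]
  · simp [hx]

/-- the "move the top element of the symmetric difference" map -/
def mv (st : Finset ℕ × Finset ℕ) : Finset ℕ × Finset ℕ :=
  if WithBot.unbotD 0 (symmDiff st.1 st.2).max ∈ st.1 then
    (st.1.erase (WithBot.unbotD 0 (symmDiff st.1 st.2).max),
      insert (WithBot.unbotD 0 (symmDiff st.1 st.2).max) st.2)
  else
    (insert (WithBot.unbotD 0 (symmDiff st.1 st.2).max) st.1,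
      st.2.erase (WithBot.unbotD 0 (symmDiff st.1 st.2).max))

lemma mv_spec (p : ℕ) {S T : Finset ℕ} (hne : S ≠ T) (h0S : 0 ∉ S) (h0T : 0 ∉ T) :
    ((mv (S, T)).1.card + (mv (S, T)).2.card = S.card + T.card
      ∧ 0 ∉ (mv (S, T)).1 ∧ 0 ∉ (mv (S, T)).2)
    ∧ (mv (S, T)).1 ≠ (mv (S, T)).2
    ∧ mv (mv (S, T)) = (S, T)
    ∧ (-1 : ℝ) ^ (mv (S, T)).1.card *
        ((∏ i ∈ (mv (S, T)).1, w p i) * ∏ i ∈ (mv (S, T)).2, w p i)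
      = -((-1 : ℝ) ^ S.card * ((∏ i ∈ S, w p i) * ∏ i ∈ T, w p i)) := by
  have hd : (symmDiff S T).Nonempty := by
    rw [Finset.nonempty_iff_ne_empty]
    intro hcon
    exact hne (symmDiff_eq_bot.mp hcon)
  set a := WithBot.unbotD 0 (symmDiff S T).max with hadef
  have ha : a ∈ symmDiff S T := max_unbot'_mem hd
  rcases Finset.mem_symmDiff.mp ha with ⟨haS, haT⟩ | ⟨haT, haS⟩
  · -- a ∈ S, a ∉ T : move a from S to T
    have ha0 : a ≠ 0 := fun h => h0S (h ▸ haS)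
    have hmv : mv (S, T) = (S.erase a, insert a T) := by
      unfold mv
      rw [← hadef, if_pos haS]
    have hScard : 1 ≤ S.card := Finset.card_pos.mpr ⟨a, haS⟩
    have hmv2 : mv (S.erase a, insert a T) = (S, T) := by
      unfold mv
      have hsd : symmDiff (S.erase a) (insert a T) = symmDiff S T := symmDiff_move haS haT
      simp only [hsd, ← hadef]
      rw [if_neg (Finset.notMem_erase a S)]
      rw [Finset.insert_erase haS, Finset.erase_insert haT]
    rw [hmv]
    refine ⟨⟨?_, ?_, ?_⟩, ?_, ?_, ?_⟩
    · rw [Finset.card_erase_of_mem haS, Finset.card_insert_of_notMem haT]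
      omega
    · exact fun h => h0S (Finset.mem_of_mem_erase h)
    · intro h
      rcases Finset.mem_insert.mp h with h | h
      · exact ha0 h.symm
      · exact h0T h
    · intro h
      dsimp only at h
      have := Finset.mem_insert_self a T
      rw [← h] at this
      exact Finset.notMem_erase a S this
    · exact hmv2
    · obtain ⟨c, hc⟩ : ∃ c, S.card = c + 1 := ⟨S.card - 1, by omega⟩
      rw [Finset.card_erase_of_mem haS, Finset.prod_insert haT,
        ← Finset.mul_prod_erase S _ haS, hc]
      simp only [Nat.add_sub_cancel]
      ring
  · -- a ∈ T, a ∉ S : move a from T to S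
    have ha0 : a ≠ 0 := fun h => h0T (h ▸ haT)
    have hmv : mv (S, T) = (insert a S, T.erase a) := by
      unfold mv
      rw [← hadef, if_neg haS]
    have hTcard : 1 ≤ T.card := Finset.card_pos.mpr ⟨a, haT⟩
    have hmv2 : mv (insert a S, T.erase a) = (S, T) := by
      unfold mv
      have hsd : symmDiff (insert a S) (T.erase a) = symmDiff S T := by
        rw [symmDiff_comm, symmDiff_move haT haS, symmDiff_comm]
      simp only [hsd, ← hadef]
      rw [if_pos (Finset.mem_insert_self a S)]
      rw [Finset.erase_insert haS, Finset.insert_erase haT]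
    rw [hmv]
    refine ⟨⟨?_, ?_, ?_⟩, ?_, ?_, ?_⟩
    · rw [Finset.card_erase_of_mem haT, Finset.card_insert_of_notMem haS]
      omega
    · intro h
      rcases Finset.mem_insert.mp h with h | h
      · exact ha0 h.symm
      · exact h0S h
    · exact fun h => h0T (Finset.mem_of_mem_erase h)
    · intro h
      dsimp only at h
      have := Finset.mem_insert_self a S
      rw [h] at this
      exact Finset.notMem_erase a T this
    · exact hmv2
    · rw [Finset.card_insert_of_notMem haS, Finset.prod_insert haS,
        ← Finset.mul_prod_erase T _ haT]
      ring

/-- the diagonal -/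
def Dset (k : ℕ) : Set (QT k) := {st | st.1.1 = st.1.2}

def iot {k : ℕ} (x : ↥((Dset k)ᶜ)) : ↥((Dset k)ᶜ) :=
  ⟨⟨mv x.1.1, by
      obtain ⟨⟨hc, h01, h02⟩, hne2, hinv, hF⟩ :=
        mv_spec 0 (x.2 : ¬ x.1.1.1 = x.1.1.2) x.1.2.2.1 x.1.2.2.2
      exact ⟨by rw [hc]; exact x.1.2.1, h01, h02⟩⟩, by
      obtain ⟨⟨hc, h01, h02⟩, hne2, hinv, hF⟩ :=
        mv_spec 0 (x.2 : ¬ x.1.1.1 = x.1.1.2) x.1.2.2.1 x.1.2.2.2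
      exact hne2⟩

lemma iot_invol {k : ℕ} : Function.Involutive (iot (k := k)) := by
  intro x
  apply Subtype.ext
  apply Subtype.ext
  show mv (mv x.1.1) = x.1.1
  exact (mv_spec 0 (x.2 : ¬ x.1.1.1 = x.1.1.2) x.1.2.2.1 x.1.2.2.2).2.2.1

lemma FF_iot {p k : ℕ} (x : ↥((Dset k)ᶜ)) : FF p k (iot x).1 = -FF p k x.1 := by
  show (-1 : ℝ) ^ (mv x.1.1).1.card * ((∏ i ∈ (mv x.1.1).1, w p i) * ∏ i ∈ (mv x.1.1).2, w p i)
    = _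
  exact (mv_spec p (x.2 : ¬ x.1.1.1 = x.1.1.2) x.1.2.2.1 x.1.2.2.2).2.2.2

lemma tsum_offdiag {p : ℕ} (hp : 2 ≤ p) (k : ℕ) :
    ∑' x : ↥((Dset k)ᶜ), FF p k x.1 = 0 := by
  have hs : Summable (fun x : ↥((Dset k)ᶜ) => FF p k x.1) :=
    (summable_FF hp k).subtype ((Dset k)ᶜ)
  have h1 := Equiv.tsum_eq (Function.Involutive.toPerm iot iot_invol)
    (fun x : ↥((Dset k)ᶜ) => FF p k x.1)
  have h2 : ∀ x : ↥((Dset k)ᶜ),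
      FF p k ((Function.Involutive.toPerm iot iot_invol) x).1 = -FF p k x.1 := fun x =>
    FF_iot x
  rw [tsum_congr h2, tsum_neg] at h1
  linarith

def diagEquiv (k : ℕ) (hk : Even k) : A (k / 2) ≃ ↥(Dset k) where
  toFun S := ⟨⟨(S.1, S.1), by
      obtain ⟨c, hc⟩ := hk
      refine ⟨?_, S.2.2, S.2.2⟩
      show S.1.card + S.1.card = k
      rw [S.2.1]
      omega⟩, rfl⟩
  invFun x := ⟨x.1.1.1, by
      have h1 : x.1.1.1 = x.1.1.2 := x.2
      have h2 := x.1.2.1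
      rw [← h1] at h2
      exact ⟨by omega, x.1.2.2.1⟩⟩
  left_inv S := by apply Subtype.ext; rfl
  right_inv x := by
    apply Subtype.ext
    apply Subtype.ext
    have h1 : x.1.1.1 = x.1.1.2 := x.2
    exact Prod.ext rfl h1

lemma tsum_diag {p k : ℕ} (hp : 2 ≤ p) (hk : Even k) :
    ∑' x : ↥(Dset k), FF p k x.1 =
      (-1 : ℝ) ^ (k / 2) * mzv (List.replicate (k / 2) (2 * p)) := by
  rw [← Equiv.tsum_eq (diagEquiv k hk) (fun x : ↥(Dset k) => FF p k x.1)]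
  have hterm : ∀ S : A (k / 2),
      FF p k (diagEquiv k hk S).1 = (-1 : ℝ) ^ (k / 2) * ∏ i ∈ S.1, w (2 * p) i := by
    intro S
    show (-1 : ℝ) ^ S.1.card * ((∏ i ∈ S.1, w p i) * ∏ i ∈ S.1, w p i) = _
    rw [S.2.1, ← Finset.prod_mul_distrib]
    congr 1
    exact Finset.prod_congr rfl fun i _ => w_sq p i
  rw [tsum_congr hterm, tsum_mul_left,
    mzv_of_const (List.replicate (k / 2) (2 * p)) (2 * p) (k / 2)
      List.length_replicate (fun i => by simp)]

end MzvAux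

open MzvAux

/-- for p ≥ 2 and even k ≥ 0,
`Σ_{m+n=k} (-1)^m ζ({p}^m) ζ({p}^n) = (-1)^{k/2} ζ({2p}^{k/2})`. -/
theorem mzv_alternating (p k : ℕ) (hp : 2 ≤ p) (hk : Even k) :
    ∑ mn ∈ Finset.HasAntidiagonal.antidiagonal k,
        (-1 : ℝ) ^ mn.1 * mzv (List.replicate mn.1 p) * mzv (List.replicate mn.2 p) =
      (-1 : ℝ) ^ (k / 2) * mzv (List.replicate (k / 2) (2 * p)) := by
  have hmzv : ∀ n : ℕ, mzv (List.replicate n p) = ∑' S : A n, ∏ i ∈ S.1, w p i := fun n =>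
    mzv_of_const _ p n List.length_replicate (fun i => by simp)
  calc
    ∑ mn ∈ Finset.HasAntidiagonal.antidiagonal k,
        (-1 : ℝ) ^ mn.1 * mzv (List.replicate mn.1 p) * mzv (List.replicate mn.2 p)
      = ∑ mn ∈ Finset.HasAntidiagonal.antidiagonal k, ∑' z : A mn.1 × A mn.2,
          (-1 : ℝ) ^ mn.1 * ((∏ i ∈ z.1.1, w p i) * ∏ i ∈ z.2.1, w p i) := by
        apply Finset.sum_congr rfl
        intro mn _
        rw [hmzv, hmzv, mul_assoc,
          tsum_mul_tsum_of_summable_norm (summable_A_norm hp mn.1) (summable_A_norm hp mn.2),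
          ← tsum_mul_left]
    _ = ∑' mn : ↥(Finset.HasAntidiagonal.antidiagonal k), ∑' z : A (mn : ℕ × ℕ).1 × A (mn : ℕ × ℕ).2,
          (-1 : ℝ) ^ (mn : ℕ × ℕ).1 * ((∏ i ∈ z.1.1, w p i) * ∏ i ∈ z.2.1, w p i) :=
        (Finset.tsum_subtype (Finset.HasAntidiagonal.antidiagonal k) (fun mn : ℕ × ℕ =>
          ∑' z : A mn.1 × A mn.2,
            (-1 : ℝ) ^ mn.1 * ((∏ i ∈ z.1.1, w p i) * ∏ i ∈ z.2.1, w p i))).symm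
    _ = ∑' mn : ↥(Finset.HasAntidiagonal.antidiagonal k), ∑' z : A (mn : ℕ × ℕ).1 × A (mn : ℕ × ℕ).2,
          GG p k ⟨mn, z⟩ := by
        apply tsum_congr; intro mn
        apply tsum_congr; intro z
        rfl
    _ = ∑' σ : (Σ mn : ↥(Finset.HasAntidiagonal.antidiagonal k), A mn.1.1 × A mn.1.2), GG p k σ :=
        (summable_GG hp k).tsum_sigma.symm
    _ = ∑' st : QT k, FF p k st := by
        rw [← FF_comp_sigEquiv]
        exact Equiv.tsum_eq (sigEquiv k) (FF p k)
    _ = (∑' x : ↥(Dset k), FF p k x.1) + ∑' x : ↥((Dset k)ᶜ), FF p k x.1 :=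
        ((summable_FF hp k).tsum_subtype_add_tsum_subtype_compl (Dset k)).symm
    _ = (-1 : ℝ) ^ (k / 2) * mzv (List.replicate (k / 2) (2 * p)) := by
        rw [tsum_offdiag hp k, add_zero, tsum_diag hp hk]
end
end
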